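/- arXiv:2112.03531 — 2 statements merged into one kernel-verified Lean document; each statement's English description precedes it below -/
import Mathlib

section
/- Let R be a commutative ring and let k, m, d be natural numbers with 0 < d < k. Let W(p,q) denote the (2p+q)×(2p+q) block matrix [[0,0,I_p],[0,I_q,0],[I_p,0,0]]. Then W(k,m) = D₁·D₂·D₃, where D₁ = blockdiag(I_{k-d}, W(d,m), I_{k-d}), D₂ = blockdiag([[0,I_{k-d}],[I_d,0]], I_m, [[0,I_d],[I_{k-d},0]]), and D₃ = blockdiag(I_d, W(k-d,m), I_d). -/
/-- The underlying index permutation of the block matrix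
`W(p,q) = [[0,0,I_p],[0,I_q,0],[I_p,0,0]]` of size `2p+q`. -/
def wPerm (p q : ℕ) : ℕ → ℕ :=
  fun i => if i < p then i + p + q else if i < p + q then i else i - (p + q)

/-- The underlying index permutation of the `(p+q)×(p+q)` block permutation matrix
`[[0,I_p],[I_q,0]]`. -/
def jPerm (p q : ℕ) : ℕ → ℕ :=
  fun i => if i < p then q + i else i - p

/-- The index map of a block-diagonal arrangement of three blocks of sizes
`a`, `b`, `c` whose blocks act by `σ₁`, `σ₂`, `σ₃` respectively. -/
def triPerm (a : ℕ) (σ₁ : ℕ → ℕ) (b : ℕ) (σ₂ : ℕ → ℕ) (σ₃ : ℕ → ℕ) : ℕ → ℕ :=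
  fun i => if i < a then σ₁ i else if i < a + b then a + σ₂ (i - a) else a + b + σ₃ (i - a - b)

/-- The matrix over `R` of size `N` whose `(i,j)` entry is `1` if `j = σ i` and `0`
otherwise. -/
def permMat (R : Type*) [CommRing R] (N : ℕ) (σ : ℕ → ℕ) : Matrix (Fin N) (Fin N) R :=
  fun i j => if (j : ℕ) = σ (i : ℕ) then 1 else 0

/-- `W(k,m)` as a `(2k+m)×(2k+m)` matrix. -/
def Wmat (R : Type*) [CommRing R] (k m : ℕ) : Matrix (Fin (2*k+m)) (Fin (2*k+m)) R :=
  permMat R (2*k+m) (wPerm k m)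

lemma permMat_mul (R : Type*) [CommRing R] (N : ℕ) (σ τ : ℕ → ℕ)
    (hσ : ∀ i < N, σ i < N) :
    permMat R N σ * permMat R N τ = permMat R N (fun i => τ (σ i)) := by
  ext i j
  have key : ∀ l : Fin N, ((l : ℕ) = σ (i : ℕ)) ↔ l = ⟨σ i, hσ i i.2⟩ := by
    intro l; constructor
    · intro h; exact Fin.ext h
    · intro h; exact congrArg Fin.val h
  simp only [permMat, Matrix.mul_apply]
  simp only [key]
  rw [Finset.sum_eq_single (⟨σ i, hσ i i.2⟩ : Fin N)]
  · simp
  · intro b _ hb; simp [hb]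
  · intro h; exact absurd (Finset.mem_univ _) h

set_option maxHeartbeats 1600000 in
/-- Reduced decomposition of `W(k,m)` (Ways 1 and 2):
`W(k,m) = blockdiag(I_{k-d}, W(d,m), I_{k-d}) ·
  blockdiag([[0,I_{k-d}],[I_d,0]], I_m, [[0,I_d],[I_{k-d},0]]) ·
  blockdiag(I_d, W(k-d,m), I_d)`. -/
theorem Wmat_decomp_way12 (R : Type*) [CommRing R] (k m d : ℕ) (hd : 0 < d) (hdk : d < k) :
    Wmat R k m =
      permMat R (2*k+m) (triPerm (k-d) id (2*d+m) (wPerm d m) id) *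
      permMat R (2*k+m) (triPerm k (jPerm (k-d) d) m id (jPerm d (k-d))) *
      permMat R (2*k+m) (triPerm d id (2*(k-d)+m) (wPerm (k-d) m) id) := by
  set σ₁ := triPerm (k-d) id (2*d+m) (wPerm d m) id with hσ₁
  set σ₂ := triPerm k (jPerm (k-d) d) m id (jPerm d (k-d)) with hσ₂
  set σ₃ := triPerm d id (2*(k-d)+m) (wPerm (k-d) m) id with hσ₃
  have s1 : ∀ i < 2*k+m, σ₁ i =
      if i < k-d then i else if i < k then i+d+m
      else if i < k+m then i else if i < k+d+m then i-(d+m) else i := by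
    intro i hi
    simp only [hσ₁, triPerm, wPerm, id_eq]
    split_ifs <;> omega
  have s2 : ∀ i < 2*k+m, σ₂ i =
      if i < k-d then i+d else if i < k then i-(k-d)
      else if i < k+m then i else if i < k+m+d then i+(k-d) else i-d := by
    intro i hi
    simp only [hσ₂, triPerm, jPerm, id_eq]
    split_ifs <;> omega
  have s3 : ∀ i < 2*k+m, σ₃ i =
      if i < d then i else if i < k then i+(k-d)+m
      else if i < k+m then i else if i < 2*k+m-d then i-(k-d)-m else i := by
    intro i hi
    simp only [hσ₃, triPerm, wPerm, id_eq]
    split_ifs <;> omega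
  have h1 : ∀ i < 2*k+m, σ₁ i < 2*k+m := by
    intro i hi; rw [s1 i hi]; split_ifs <;> omega
  have h2 : ∀ i < 2*k+m, σ₂ (σ₁ i) < 2*k+m := by
    intro i hi; rw [s1 i hi]
    split_ifs <;> (rw [s2 _ (by omega)]; split_ifs <;> omega)
  rw [permMat_mul R (2*k+m) σ₁ σ₂ h1, permMat_mul R (2*k+m) _ σ₃ h2]
  have heq : ∀ i < 2*k+m, wPerm k m i = σ₃ (σ₂ (σ₁ i)) := by
    intro i hi
    rw [s1 i hi]
    split_ifs <;>
      (rw [s2 _ (by omega)]; split_ifs <;>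
        (rw [s3 _ (by omega)]; simp only [wPerm]; split_ifs <;> omega))
  ext i j
  simp only [Wmat, permMat]
  rw [heq i i.2]
end

section
/- Let G be a commutative group and f, g, h : ℚ → G any functions. For a positive integer a and s ∈ ℚ define F(a,s) := (∏_{i=1}^{⌈a/2⌉} f(2s + a + 1 - 2i)) · (∏_{i=1}^{⌊a/2⌋} g(2s + a - 2i)) · h(s + (a-1)/2). Then for every odd integer a ≥ 3 and every s ∈ ℚ: F(1, s - (a-1)/2) · f(2s) · g(2s) · F(a-1, s + 1/2) = F(a, s) · g(2s) · f(2s - (a-1)) · h(s - (a-1)/2). -/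
open Finset in
/-- Discrepancy computation for Way 2 (case `a` odd), with
`F(a,s) = (∏_{i=1}^{⌈a/2⌉} f(2s+a+1-2i)) · (∏_{i=1}^{⌊a/2⌋} g(2s+a-2i)) · h(s+(a-1)/2)`:
`F(1,s-(a-1)/2)·f(2s)·g(2s)·F(a-1,s+1/2) = F(a,s)·g(2s)·f(2s-(a-1))·h(s-(a-1)/2)`. -/
theorem discrepancy_way2 {G : Type*} [CommGroup G] (f g h : ℚ → G)
    (F : ℕ → ℚ → G)
    (hF : ∀ (a : ℕ) (s : ℚ),
      F a s = (∏ i ∈ Finset.Icc 1 ((a + 1) / 2), f (2 * s + a + 1 - 2 * i)) *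
        (∏ i ∈ Finset.Icc 1 (a / 2), g (2 * s + a - 2 * i)) *
        h (s + ((a : ℚ) - 1) / 2)) :
    ∀ a : ℕ, Odd a → 3 ≤ a → ∀ s : ℚ,
      F 1 (s - ((a : ℚ) - 1) / 2) * f (2 * s) * g (2 * s) * F (a - 1) (s + 1/2) =
        F a s * g (2 * s) * f (2 * s - ((a : ℚ) - 1)) * h (s - ((a : ℚ) - 1) / 2) := by
  intro a ha h3 s
  obtain ⟨k, hk⟩ := ha
  subst hk
  have hk1 : 1 ≤ k := by omega
  rw [hF, hF, hF]
  have e1 : 2 * k + 1 - 1 = 2 * k := by omega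
  have e2 : (2 * k + 1 + 1) / 2 = k + 1 := by omega
  have e3 : (2 * k + 1) / 2 = k := by omega
  have e4 : (2 * k) / 2 = k := by omega
  rw [e1, e2, e3, e4]
  norm_num
  rw [Finset.prod_Icc_succ_top (by omega : 1 ≤ k + 1)]
  push_cast
  have hf2s : 2 * s + (2 * (k : ℚ) + 1) + 1 - 2 * (k + 1) = 2 * s := by ring
  rw [hf2s]
  have pf : ∀ i : ℕ, (2 * (s + 1/2) + 2 * (k:ℚ) + 1 - 2 * i) =
      (2 * s + (2 * (k:ℚ) + 1) + 1 - 2 * i) := by intro i; ring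
  have pg : ∀ i : ℕ, (2 * (s + 1/2) + 2 * (k:ℚ) - 2 * i) =
      (2 * s + (2 * (k:ℚ) + 1) - 2 * i) := by intro i; ring
  simp only [pf, pg]
  have ha1 : 2 * (s - (k:ℚ)) + 1 + 1 - 2 = 2 * s - 2 * k := by ring
  have ha2 : s + 1/2 + (2 * (k:ℚ) - 1) / 2 = s + (2 * (k:ℚ) + 1 - 1) / 2 := by ring
  rw [ha1, ha2]
  have ha3 : s + (2 * (k:ℚ) + 1 - 1) / 2 = s + k := by ring
  rw [ha3]
  simp [mul_comm, mul_assoc, mul_left_comm]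
end
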